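/- For every integer n ≥ 0, 0<|q|<1, and y not of the form -q^{-m} (m ≥ 0) nor ±q^{-m}: ∑_{k=0}^n q^k (yq^n;q)_k / (q²;q²)_k = (-y;q)_n · ∑_{k=0}^n q^k (y/q;q)_{2k} / ((q²;q²)_k (y²;q²)_k). -/

import Mathlib

noncomputable def qPoch (a q : ℂ) (n : ℕ) : ℂ := ∏ i ∈ Finset.range n, (1 - a * q ^ i)

noncomputable def qPochInf (a q : ℂ) : ℂ := ∏' i : ℕ, (1 - a * q ^ i)

noncomputable def qBinom (q : ℂ) (m k : ℕ) : ℂ :=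
  if k ≤ m then qPoch q q m / (qPoch q q k * qPoch q q (m - k)) else 0

/-!
Both sides satisfy the first-order recurrence `S (n+1) = (1 + y q^n) S n + t (n+1)` with
`t m = (-y;q)_m g m`, where `g` is the summand on the right; for the right-hand side this is
immediate from `(-y;q)_{n+1} = (-y;q)_n (1 + y q^n)`.
For the left-hand side `L n = ∑_{k ≤ n} F n k`, Gosper's algorithm applied to
`k ↦ (1 - y q^n) F (n+1) k - (1 - y² q^{2n}) F n k` finds the antidifference
`G k = -y q^n (1 - q^{2k}) (y q^n;q)_k / (q²;q²)_k`, and the boundary terms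
`F (n+1) (n+1)` and `G (n+1)` combine into exactly the term `t (n+1)` of the right-hand side.
-/

section QPochhammer

variable (a q : ℂ)

@[simp]
lemma qPoch_zero : qPoch a q 0 = 1 := by simp [qPoch]

lemma qPoch_succ (n : ℕ) : qPoch a q (n + 1) = qPoch a q n * (1 - a * q ^ n) :=
  Finset.prod_range_succ _ _

lemma qPoch_succ' (n : ℕ) : qPoch a q (n + 1) = (1 - a) * qPoch (a * q) q n := by
  rw [qPoch, Finset.prod_range_succ', mul_comm]
  simp only [pow_zero, mul_one, pow_succ, mul_assoc, qPoch, mul_comm q]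

lemma qPoch_add (m l : ℕ) : qPoch a q (m + l) = qPoch a q m * qPoch (a * q ^ m) q l := by
  simp only [qPoch, Finset.prod_range_add, pow_add, mul_assoc]

lemma qPoch_sq_sq (n : ℕ) : qPoch (a ^ 2) (q ^ 2) n = qPoch a q n * qPoch (-a) q n := by
  simp only [qPoch, ← Finset.prod_mul_distrib]
  exact Finset.prod_congr rfl fun i _ => by ring

lemma qPoch_ne_zero {a q : ℂ} (h : ∀ i : ℕ, a * q ^ i ≠ 1) (n : ℕ) : qPoch a q n ≠ 0 :=
  Finset.prod_ne_zero_iff.mpr fun i _ => sub_ne_zero.mpr (h i).symm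

lemma qPoch_two_mul_succ {a q : ℂ} (hq : q ≠ 0) (n : ℕ) :
    qPoch (a / q) q (2 * (n + 1)) =
      (1 - a / q) * qPoch a q (n + 1) * qPoch (a * q ^ (n + 1)) q n := by
  rw [show 2 * (n + 1) = (n + 1 + n) + 1 by ring, qPoch_succ', div_mul_cancel₀ a hq, qPoch_add,
    mul_assoc]

lemma qPoch_mul_pow_succ (n k : ℕ) :
    (1 - a * q ^ n) * qPoch (a * q ^ (n + 1)) q k =
      (1 - a * q ^ (n + k)) * qPoch (a * q ^ n) q k := by
  rw [pow_succ, ← mul_assoc, ← qPoch_succ', qPoch_succ, pow_add, mul_assoc]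
  ring

end QPochhammer

noncomputable def leftSummand (q y : ℂ) (n k : ℕ) : ℂ :=
  q ^ k * qPoch (y * q ^ n) q k / qPoch (q ^ 2) (q ^ 2) k

noncomputable def rightSummand (q y : ℂ) (k : ℕ) : ℂ :=
  q ^ k * qPoch (y / q) q (2 * k) / (qPoch (q ^ 2) (q ^ 2) k * qPoch (y ^ 2) (q ^ 2) k)

noncomputable def gosperTerm (q y : ℂ) (n k : ℕ) : ℂ :=
  -y * q ^ n * (1 - q ^ (2 * k)) * qPoch (y * q ^ n) q k / qPoch (q ^ 2) (q ^ 2) k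

noncomputable def leftSum (q y : ℂ) (n : ℕ) : ℂ :=
  ∑ k ∈ Finset.range (n + 1), leftSummand q y n k

noncomputable def rightSide (q y : ℂ) (n : ℕ) : ℂ :=
  qPoch (-y) q n * ∑ k ∈ Finset.range (n + 1), rightSummand q y k

section Recurrence

variable {q y : ℂ}

lemma leftSummand_succ_left (n k : ℕ) :
    (1 - y * q ^ n) * leftSummand q y (n + 1) k =
      (1 - y * q ^ (n + k)) * leftSummand q y n k := by
  simp only [leftSummand, mul_div_assoc', mul_left_comm _ (q ^ k), qPoch_mul_pow_succ]

lemma gosperTerm_succ_sub (n : ℕ) {k : ℕ} (hk : q ^ (2 * k + 2) ≠ 1) :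
    gosperTerm q y n (k + 1) - gosperTerm q y n k =
      (1 - y * q ^ n) * leftSummand q y (n + 1) k -
        (1 - y ^ 2 * q ^ (2 * n)) * leftSummand q y n k := by
  rw [leftSummand_succ_left]
  have hk' : 1 - q ^ 2 * (q ^ 2) ^ k ≠ 0 := by
    rw [← pow_mul, ← pow_add, add_comm]; exact sub_ne_zero.mpr hk.symm
  simp only [gosperTerm, leftSummand, qPoch_succ, mul_add, mul_one, pow_add]
  field_simp
  ring

lemma sum_leftSummand_succ (n N : ℕ) (hq : ∀ m : ℕ, q ^ (m + 1) ≠ 1) :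
    (1 - y * q ^ n) * ∑ k ∈ Finset.range N, leftSummand q y (n + 1) k =
      (1 - y ^ 2 * q ^ (2 * n)) * ∑ k ∈ Finset.range N, leftSummand q y n k +
        gosperTerm q y n N := by
  have hG0 : gosperTerm q y n 0 = 0 := by simp [gosperTerm]
  rw [← sub_eq_iff_eq_add', Finset.mul_sum, Finset.mul_sum, ← Finset.sum_sub_distrib,
    ← sub_zero (gosperTerm q y n N), ← hG0, ← Finset.sum_range_sub]
  exact Finset.sum_congr rfl fun k _ => (gosperTerm_succ_sub n (hq (2 * k + 1))).symm

lemma qPoch_neg_mul_rightSummand_succ (hq : q ≠ 0) (hy : ∀ m : ℕ, y * q ^ m ≠ 1)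
    (hy' : ∀ m : ℕ, -y * q ^ m ≠ 1) (n : ℕ) :
    qPoch (-y) q (n + 1) * rightSummand q y (n + 1) =
      q ^ n * (q - y) * qPoch (y * q ^ (n + 1)) q n / qPoch (q ^ 2) (q ^ 2) (n + 1) := by
  have := qPoch_ne_zero hy (n + 1)
  have := qPoch_ne_zero hy' (n + 1)
  rw [rightSummand, qPoch_two_mul_succ hq, qPoch_sq_sq y q]
  field_simp
  ring

lemma leftSummand_diag_add_gosperTerm (hq : q ≠ 0) (hy : ∀ m : ℕ, y * q ^ m ≠ 1)
    (hy' : ∀ m : ℕ, -y * q ^ m ≠ 1) {n : ℕ} (hn : q ^ (2 * n + 2) ≠ 1) :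
    (1 - y * q ^ n) * leftSummand q y (n + 1) (n + 1) + gosperTerm q y n (n + 1) =
      (1 - y * q ^ n) * (qPoch (-y) q (n + 1) * rightSummand q y (n + 1)) := by
  have hn' : 1 - q ^ (2 * n + 2) ≠ 0 := sub_ne_zero.mpr hn.symm
  have hZ : qPoch (q ^ 2) (q ^ 2) (n + 1) =
      qPoch (q ^ 2) (q ^ 2) n * (1 - q ^ (2 * n + 2)) := by
    rw [qPoch_succ, ← pow_mul, ← pow_add]; ring_nf
  have hF : qPoch (y * q ^ (n + 1)) q (n + 1) =
      qPoch (y * q ^ (n + 1)) q n * (1 - y * q ^ (2 * n + 1)) := by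
    rw [qPoch_succ]; ring_nf
  have hG : qPoch (y * q ^ n) q (n + 1) = (1 - y * q ^ n) * qPoch (y * q ^ (n + 1)) q n := by
    rw [qPoch_succ', mul_assoc, ← pow_succ]
  rw [qPoch_neg_mul_rightSummand_succ hq hy hy', leftSummand, gosperTerm, hZ, hF, hG]
  field_simp
  ring

lemma leftSum_succ (hq : ∀ m : ℕ, q ^ (m + 1) ≠ 1) (hq0 : q ≠ 0)
    (hy : ∀ m : ℕ, y * q ^ m ≠ 1) (hy' : ∀ m : ℕ, -y * q ^ m ≠ 1) (n : ℕ) :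
    leftSum q y (n + 1) =
      (1 + y * q ^ n) * leftSum q y n + qPoch (-y) q (n + 1) * rightSummand q y (n + 1) := by
  apply mul_left_cancel₀ (sub_ne_zero.mpr (hy n).symm)
  have hsum := sum_leftSummand_succ n (n + 1) hq (y := y)
  have hdiag := leftSummand_diag_add_gosperTerm hq0 hy hy' (hq (2 * n + 1))
  rw [leftSum, Finset.sum_range_succ, leftSum]
  linear_combination hsum + hdiag

lemma rightSide_succ (n : ℕ) :
    rightSide q y (n + 1) =
      (1 + y * q ^ n) * rightSide q y n + qPoch (-y) q (n + 1) * rightSummand q y (n + 1) := by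
  rw [rightSide, rightSide, Finset.sum_range_succ, qPoch_succ]
  ring

lemma leftSum_eq_rightSide (hq : ∀ m : ℕ, q ^ (m + 1) ≠ 1) (hq0 : q ≠ 0)
    (hy : ∀ m : ℕ, y * q ^ m ≠ 1) (hy' : ∀ m : ℕ, -y * q ^ m ≠ 1) (n : ℕ) :
    leftSum q y n = rightSide q y n := by
  induction n with
  | zero => simp [leftSum, rightSide, leftSummand, rightSummand]
  | succ n ih => rw [leftSum_succ hq hq0 hy hy', rightSide_succ, ih]

end Recurrence

theorem stmt_5 (q y : ℂ) (n : ℕ) (hq0 : 0 < ‖q‖) (hq1 : ‖q‖ < 1)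
    (hy : ∀ m : ℕ, y ≠ q ^ (-(m : ℤ)) ∧ y ≠ -q ^ (-(m : ℤ))) :
    ∑ k ∈ Finset.range (n + 1), q ^ k * qPoch (y * q ^ n) q k / qPoch (q ^ 2) (q ^ 2) k =
    qPoch (-y) q n * ∑ k ∈ Finset.range (n + 1),
      q ^ k * qPoch (y / q) q (2 * k) /
        (qPoch (q ^ 2) (q ^ 2) k * qPoch (y ^ 2) (q ^ 2) k) := by
  have hq : ∀ m : ℕ, q ^ (m + 1) ≠ 1 := fun m h => by
    have := pow_lt_one₀ (norm_nonneg q) hq1 m.succ_ne_zero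
    rw [← norm_pow, h, norm_one] at this
    exact lt_irrefl 1 this
  have hy1 : ∀ m : ℕ, y * q ^ m ≠ 1 := fun m h =>
    (hy m).1 (by rw [zpow_neg, zpow_natCast]; exact eq_inv_of_mul_eq_one_left h)
  have hy2 : ∀ m : ℕ, -y * q ^ m ≠ 1 := fun m h =>
    (hy m).2 (by rw [zpow_neg, zpow_natCast, ← eq_inv_of_mul_eq_one_left h, neg_neg])
  exact leftSum_eq_rightSide hq (norm_pos_iff.mp hq0) hy1 hy2 n
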